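/- arXiv:0707.0437 — 3 statements merged into one kernel-verified Lean document; each statement's English description precedes it below -/
import Mathlib

section
/- There are no odd coprime integers α and β such that β(16α − β) is the square of an integer. -/
/-- There are no odd coprime integers `α` and `β` such that `β * (16α − β)` is
the square of an integer. -/
theorem no_odd_coprime_square :
    ¬ ∃ α β : ℤ, Odd α ∧ Odd β ∧ IsCoprime α β ∧ IsSquare (β * (16 * α - β)) := by
  rintro ⟨α, β, hα, ⟨k, hk⟩, -, c, hc⟩
  have h8 : ((β * (16 * α - β) : ℤ) : ZMod 8) = ((c * c : ℤ) : ZMod 8) := by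
    exact_mod_cast congrArg (fun n : ℤ => (n : ZMod 8)) hc
  subst hk
  push_cast at h8
  have key : ∀ x a y : ZMod 8, ¬ ((2 * x + 1) * (16 * a - (2 * x + 1)) = y * y) := by decide
  exact key (k : ZMod 8) (α : ZMod 8) (c : ZMod 8) h8
end

section
/- Let p and q be odd primes and let s, t ≥ 1 be integers with q^(2s) − 1 = 16·p^t. Then either q^s = 7 and p^t = 3, or q^s = 9 and p^t = 5. -/
/-- Let `p` and `q` be odd primes and `s, t ≥ 1` integers with `q^(2s) − 1 = 16·p^t`.
Then either `q^s = 7` and `p^t = 3`, or `q^s = 9` and `p^t = 5`. -/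
theorem q_pow_sq_sub_one_eq_sixteen_p_pow (p q : ℕ) (hp : p.Prime) (hq : q.Prime)
    (hpodd : Odd p) (hqodd : Odd q) (s t : ℕ) (hs : 1 ≤ s) (ht : 1 ≤ t)
    (h : q ^ (2 * s) - 1 = 16 * p ^ t) :
    (q ^ s = 7 ∧ p ^ t = 3) ∨ (q ^ s = 9 ∧ p ^ t = 5) := by
  have hq3 : 3 ≤ q := by rcases hqodd with ⟨k, hk⟩; have := hq.two_le; omega
  have hp3 : 3 ≤ p := by rcases hpodd with ⟨k, hk⟩; have := hp.two_le; omega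
  have hPodd : p ^ t % 2 = 1 := Nat.odd_iff.mp (hpodd.pow)
  have hQodd : q ^ s % 2 = 1 := Nat.odd_iff.mp (hqodd.pow)
  have hQ3 : 3 ≤ q ^ s := le_trans hq3 (Nat.le_self_pow (by omega) q)
  have hQ2 : (q ^ s) ^ 2 - 1 = 16 * p ^ t := by rw [← pow_mul, mul_comm s 2]; exact h
  have hPpos : 0 < p ^ t := pow_pos (by omega) t
  obtain ⟨m, hm⟩ : ∃ m, q ^ s = m + 1 := ⟨q ^ s - 1, by omega⟩
  have hm2 : 2 ≤ m := by omega
  have hsq : (m + 1) ^ 2 = 16 * p ^ t + 1 := by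
    rw [hm] at hQ2
    have h1 : 1 ≤ (m + 1) ^ 2 := Nat.one_le_pow _ _ (by omega)
    omega
  have hfac : m * (m + 2) = 16 * p ^ t := by nlinarith [hsq]
  have key : q ^ s * q ^ s = 16 * p ^ t + 1 := by
    rw [hm]; nlinarith [hfac]
  have hpdvd : p ∣ m * (m + 2) := by
    rw [hfac]; exact Dvd.dvd.mul_left (dvd_pow_self p (by omega)) 16
  have hptdvd : p ^ t ∣ m * (m + 2) := ⟨16, by rw [hfac, mul_comm]⟩
  have hbound : q ^ s ≤ 17 := by
    rcases (Nat.Prime.dvd_mul hp).mp hpdvd with h1 | h1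
    · have hnd : ¬ p ∣ m + 2 := by
        intro h2
        have hd2 : p ∣ 2 := by
          have := Nat.dvd_sub h2 h1
          simpa using this
        have := Nat.le_of_dvd (by norm_num) hd2
        omega
      have hcop : Nat.Coprime (p ^ t) (m + 2) :=
        Nat.Coprime.pow_left t (hp.coprime_iff_not_dvd.mpr hnd)
      obtain ⟨k, hk⟩ := hcop.dvd_of_dvd_mul_right hptdvd
      have hk1 : 1 ≤ k := by
        rcases Nat.eq_zero_or_pos k with h0 | h0
        · subst h0; omega
        · exact h0
      have h16 : k * (m + 2) = 16 := by
        have heq : p ^ t * (k * (m + 2)) = p ^ t * 16 := by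
          rw [← mul_assoc, ← hk, hfac, mul_comm]
        exact Nat.eq_of_mul_eq_mul_left hPpos heq
      have hle : m + 2 ≤ 16 := by
        calc m + 2 ≤ k * (m + 2) := Nat.le_mul_of_pos_left _ hk1
        _ = 16 := h16
      omega
    · have hnd : ¬ p ∣ m := by
        intro h2
        have hd2 : p ∣ 2 := by
          have := Nat.dvd_sub h1 h2
          simpa using this
        have := Nat.le_of_dvd (by norm_num) hd2
        omega
      have hcop : Nat.Coprime (p ^ t) m :=
        Nat.Coprime.pow_left t (hp.coprime_iff_not_dvd.mpr hnd)
      obtain ⟨k, hk⟩ := hcop.dvd_of_dvd_mul_left hptdvd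
      have hk1 : 1 ≤ k := by
        rcases Nat.eq_zero_or_pos k with h0 | h0
        · subst h0; omega
        · exact h0
      have h16 : k * m = 16 := by
        have heq : p ^ t * (k * m) = p ^ t * 16 := by
          rw [← mul_assoc, ← hk, mul_comm (m + 2) m, hfac, mul_comm]
        exact Nat.eq_of_mul_eq_mul_left hPpos heq
      have hle : m ≤ 16 := by
        calc m ≤ k * m := Nat.le_mul_of_pos_left _ hk1
        _ = 16 := h16
      omega
  obtain ⟨P, hP⟩ : ∃ P, p ^ t = P := ⟨_, rfl⟩
  obtain ⟨n, hn⟩ : ∃ n, q ^ s = n := ⟨_, rfl⟩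
  rw [hP] at key hPodd
  rw [hn] at key hQodd hQ3 hbound
  rw [hP, hn]
  interval_cases n <;> omega
end

section
/- Let p and q be distinct odd primes, let a be an integer, and let c be a positive perfect square with gcd(4a + 1, c) = 1. Suppose that c·((4a + 1)² − 64c) = p^(2r)·q^(2s) for some integers r, s ≥ 1. Then {p, q} = {3, 5} or {p, q} = {3, 7} (equivalently, pq = 15 or pq = 21). -/
lemma split_pow {p q : ℕ} (hp : p.Prime) (hq : q.Prime) (hpq : p ≠ q) (m n E F : ℕ)
    (hco : Nat.Coprime E F) (hEF : E * F = p ^ m * q ^ n) :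
    (E = 1 ∧ F = p ^ m * q ^ n) ∨ (E = p ^ m ∧ F = q ^ n) ∨
      (E = q ^ n ∧ F = p ^ m) ∨ (E = p ^ m * q ^ n ∧ F = 1) := by
  have hE : E ∣ p ^ m * q ^ n := ⟨F, hEF.symm⟩
  have hF : F ∣ p ^ m * q ^ n := ⟨E, by rw [← hEF]; ring⟩
  obtain ⟨d1, d2, hd1, hd2, hEeq⟩ := exists_dvd_and_dvd_of_dvd_mul hE
  obtain ⟨i, hi, rfl⟩ := (Nat.dvd_prime_pow hp).mp hd1
  obtain ⟨j, hj, rfl⟩ := (Nat.dvd_prime_pow hq).mp hd2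
  obtain ⟨e1, e2, he1, he2, hFeq⟩ := exists_dvd_and_dvd_of_dvd_mul hF
  obtain ⟨k, hk, rfl⟩ := (Nat.dvd_prime_pow hp).mp he1
  obtain ⟨l, hl, rfl⟩ := (Nat.dvd_prime_pow hq).mp he2
  subst hEeq hFeq
  have key : p ^ (i + k) * q ^ (j + l) = p ^ m * q ^ n := by
    rw [← hEF]; ring
  have hpq' : Nat.Coprime p q := (Nat.coprime_primes hp hq).mpr hpq
  have hik : i + k = m := by
    have h1 : p ^ (i + k) ∣ p ^ m * q ^ n := key ▸ dvd_mul_right _ _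
    have h2 : p ^ (i + k) ∣ p ^ m :=
      (Nat.Coprime.dvd_of_dvd_mul_right (hpq'.pow _ _) h1)
    have h3 : p ^ m ∣ p ^ (i + k) * q ^ (j + l) := key.symm ▸ dvd_mul_right _ _
    have h4 : p ^ m ∣ p ^ (i + k) :=
      (Nat.Coprime.dvd_of_dvd_mul_right (hpq'.pow _ _) h3)
    have := (Nat.pow_dvd_pow_iff_le_right hp.one_lt).mp h2
    have := (Nat.pow_dvd_pow_iff_le_right hp.one_lt).mp h4
    omega
  have hjl : j + l = n := by
    have h0 : q ^ (j + l) * p ^ (i + k) = q ^ n * p ^ m := by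
      rw [mul_comm, key, mul_comm]
    have h1 : q ^ (j + l) ∣ q ^ n * p ^ m := h0 ▸ dvd_mul_right _ _
    have h2 : q ^ (j + l) ∣ q ^ n :=
      (Nat.Coprime.dvd_of_dvd_mul_right (hpq'.symm.pow _ _) h1)
    have h3 : q ^ n ∣ q ^ (j + l) * p ^ (i + k) := h0.symm ▸ dvd_mul_right _ _
    have h4 : q ^ n ∣ q ^ (j + l) :=
      (Nat.Coprime.dvd_of_dvd_mul_right (hpq'.symm.pow _ _) h3)
    have := (Nat.pow_dvd_pow_iff_le_right hq.one_lt).mp h2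
    have := (Nat.pow_dvd_pow_iff_le_right hq.one_lt).mp h4
    omega
  have hik0 : i = 0 ∨ k = 0 := by
    by_contra hcon
    push_neg at hcon
    have hpa : p ∣ p ^ i * q ^ j := dvd_mul_of_dvd_left (dvd_pow_self p hcon.1) _
    have hpb : p ∣ p ^ k * q ^ l := dvd_mul_of_dvd_left (dvd_pow_self p hcon.2) _
    have hg : Nat.gcd (p ^ i * q ^ j) (p ^ k * q ^ l) = 1 := hco
    have := Nat.dvd_gcd hpa hpb
    rw [hg] at this
    have := Nat.le_of_dvd one_pos this
    have := hp.two_le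
    omega
  have hjl0 : j = 0 ∨ l = 0 := by
    by_contra hcon
    push_neg at hcon
    have hpa : q ∣ p ^ i * q ^ j := dvd_mul_of_dvd_right (dvd_pow_self q hcon.1) _
    have hpb : q ∣ p ^ k * q ^ l := dvd_mul_of_dvd_right (dvd_pow_self q hcon.2) _
    have hg : Nat.gcd (p ^ i * q ^ j) (p ^ k * q ^ l) = 1 := hco
    have := Nat.dvd_gcd hpa hpb
    rw [hg] at this
    have := Nat.le_of_dvd one_pos this
    have := hq.two_le
    omega
  rcases hik0 with h1 | h1 <;> rcases hjl0 with h2 | h2 <;> subst h1 h2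
  · left
    constructor
    · simp
    · have hkm : k = m := by omega
      have hln : l = n := by omega
      rw [hkm, hln]
  · right; right; left
    have hkm : k = m := by omega
    have hjn : j = n := by omega
    subst hkm hjn
    constructor
    · simp
    · simp
  · right; left
    have him : i = m := by omega
    have hln : l = n := by omega
    subst him hln
    constructor
    · simp
    · simp
  · right; right; right
    have him : i = m := by omega
    have hjn : j = n := by omega
    subst him hjn
    constructor
    · simp
    · simp

lemma case_pow {p q : ℕ} (hp : p.Prime) (hq : q.Prime) (hpodd : Odd p) (hqodd : Odd q)
    {r s u : ℕ} (hr : 1 ≤ r) (hs : 1 ≤ s) (hu : 1 ≤ u)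
    (hco : Nat.Coprime u (u + q ^ s)) (heq : u * (u + q ^ s) = 16 * p ^ (2 * r)) :
    (p = 5 ∧ q = 3) ∨ (p = 3 ∧ q = 7) := by
  have hp3 : 3 ≤ p := by
    obtain ⟨w, hw⟩ := hpodd; have := hp.two_le; omega
  have hq3 : 3 ≤ q := by
    obtain ⟨w, hw⟩ := hqodd; have := hq.two_le; omega
  have htp : 3 ≤ p ^ r := le_trans hp3 (Nat.le_self_pow (by omega) p)
  have hqs : 3 ≤ q ^ s := le_trans hq3 (Nat.le_self_pow (by omega) q)
  have h2p : (2 : ℕ) ≠ p := by omega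
  have heq' : u * (u + q ^ s) = 2 ^ 4 * p ^ (2 * r) := by rw [heq]; norm_num
  have ht2 : p ^ (2 * r) = p ^ r * p ^ r := by rw [two_mul, pow_add]
  rcases split_pow Nat.prime_two hp h2p 4 (2 * r) u (u + q ^ s) hco heq' with
    ⟨hu1, hF⟩ | ⟨hu1, hF⟩ | ⟨hu1, hF⟩ | ⟨hu1, hF⟩
  · -- u = 1, 1 + q^s = 16 t^2 : impossible
    exfalso
    rw [hu1, ht2] at hF
    norm_num at hF
    obtain ⟨x, hx⟩ : ∃ x, 4 * (p ^ r) = x + 1 := ⟨4 * p ^ r - 1, by omega⟩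
    have e2 : x * (x + 2) + 1 = 16 * (p ^ r * p ^ r) := by
      have : x * (x + 2) + 1 = (x + 1) * (x + 1) := by ring
      rw [this, ← hx]; ring
    have e3 : q ^ s = x * (x + 2) := by linarith
    have hdx : x ∣ q ^ s := Dvd.intro _ e3.symm
    have hdy : (x + 2) ∣ q ^ s := ⟨x, by rw [e3]; ring⟩
    obtain ⟨i, hi, hxi⟩ := (Nat.dvd_prime_pow hq).mp hdx
    obtain ⟨j, hj, hyj⟩ := (Nat.dvd_prime_pow hq).mp hdy
    have hx11 : 11 ≤ x := by omega
    have hi0 : i ≠ 0 := by rintro rfl; rw [pow_zero] at hxi; omega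
    have hj0 : j ≠ 0 := by rintro rfl; rw [pow_zero] at hyj; omega
    have hqx : q ∣ x := hxi ▸ dvd_pow_self q hi0
    have hqy : q ∣ x + 2 := hyj ▸ dvd_pow_self q hj0
    have hq2 : q ∣ 2 := by
      have h' := Nat.dvd_sub hqy hqx
      have h'' : x + 2 - x = 2 := by omega
      rwa [h''] at h'
    have := Nat.le_of_dvd (by norm_num) hq2
    omega
  · -- u = 16, 16 + q^s = t^2
    rw [ht2] at hF
    norm_num at hu1
    rw [hu1] at hF
    have ht5 : 5 ≤ p ^ r := by nlinarith
    obtain ⟨x, hx, hx1⟩ : ∃ x, p ^ r = x + 4 ∧ 1 ≤ x := ⟨p ^ r - 4, by omega, by omega⟩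
    have e2 : x * (x + 8) + 16 = p ^ r * p ^ r := by
      have : x * (x + 8) + 16 = (x + 4) * (x + 4) := by ring
      rw [this, ← hx]
    have e3 : q ^ s = x * (x + 8) := by linarith
    have hdx : x ∣ q ^ s := Dvd.intro _ e3.symm
    have hdy : (x + 8) ∣ q ^ s := ⟨x, by rw [e3]; ring⟩
    obtain ⟨i, hi, hxi⟩ := (Nat.dvd_prime_pow hq).mp hdx
    obtain ⟨j, hj, hyj⟩ := (Nat.dvd_prime_pow hq).mp hdy
    have hj0 : j ≠ 0 := by rintro rfl; rw [pow_zero] at hyj; omega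
    have hqy : q ∣ x + 8 := hyj ▸ dvd_pow_self q hj0
    rcases Nat.eq_zero_or_pos i with hi0 | hi0
    · -- x = 1, p^r = 5, q^s = 9
      left
      subst hi0
      rw [pow_zero] at hxi
      have hx1' : x = 1 := hxi
      have hpr5 : p ^ r = 5 := by omega
      have hp5 : p = 5 := by
        have hdvd : p ∣ 5 := hpr5 ▸ dvd_pow_self p (by omega)
        exact (Nat.prime_dvd_prime_iff_eq hp (by norm_num)).mp hdvd
      have hqs9 : q ^ s = 9 := by rw [hx1'] at e3; norm_num at e3; exact e3
      have hq3' : q = 3 := by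
        have hdvd : q ∣ 9 := hqs9 ▸ dvd_pow_self q (by omega)
        have h9 : (9 : ℕ) = 3 ^ 2 := by norm_num
        have := hq.dvd_of_dvd_pow (h9 ▸ hdvd)
        exact (Nat.prime_dvd_prime_iff_eq hq (by norm_num)).mp this
      exact ⟨hp5, hq3'⟩
    · exfalso
      have hqx : q ∣ x := hxi ▸ dvd_pow_self q (by omega)
      have hq8 : q ∣ 8 := by
        have h' := Nat.dvd_sub hqy hqx
        have h'' : x + 8 - x = 8 := by omega
        rwa [h''] at h'
      have h8 : (8 : ℕ) = 2 ^ 3 := by norm_num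
      have := hq.dvd_of_dvd_pow (h8 ▸ hq8)
      have := Nat.le_of_dvd (by norm_num) this
      omega
  · -- u = t^2, u + q^s = 16
    right
    rw [ht2] at hu1
    norm_num at hF
    rw [hu1] at hF
    have ht3 : p ^ r = 3 := by nlinarith
    have hp3' : p = 3 := by
      have hdvd : p ∣ 3 := ht3 ▸ dvd_pow_self p (by omega)
      exact (Nat.prime_dvd_prime_iff_eq hp (by norm_num)).mp hdvd
    have hqs7 : q ^ s = 7 := by rw [ht3] at hF; omega
    have hq7 : q = 7 := by
      have hdvd : q ∣ 7 := hqs7 ▸ dvd_pow_self q (by omega)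
      exact (Nat.prime_dvd_prime_iff_eq hq (by norm_num)).mp hdvd
    exact ⟨hp3', hq7⟩
  · exfalso
    linarith

/-- Let `p` and `q` be distinct odd primes, `a` an integer, and `c` a positive perfect
square coprime to `4a + 1`. If `c·((4a + 1)² − 64c) = p^(2r)·q^(2s)` for some
`r, s ≥ 1`, then `{p, q} = {3, 5}` or `{p, q} = {3, 7}`. -/
theorem conductor_fifteen_or_twentyone (p q : ℕ) (hp : p.Prime) (hq : q.Prime)
    (hpodd : Odd p) (hqodd : Odd q) (hpq : p ≠ q) (a c : ℤ) (hc : 0 < c)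
    (hcsq : IsSquare c) (hcop : IsCoprime (4 * a + 1) c) (r s : ℕ) (hr : 1 ≤ r) (hs : 1 ≤ s)
    (h : c * ((4 * a + 1) ^ 2 - 64 * c) = (p : ℤ) ^ (2 * r) * (q : ℤ) ^ (2 * s)) :
    ({p, q} : Set ℕ) = {3, 5} ∨ ({p, q} : Set ℕ) = {3, 7} := by
  have hp3 : 3 ≤ p := by obtain ⟨w, hw⟩ := hpodd; have := hp.two_le; omega
  have hq3 : 3 ≤ q := by obtain ⟨w, hw⟩ := hqodd; have := hq.two_le; omega
  -- positivity of the right-hand side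
  have hppos : (0 : ℤ) < (p : ℤ) := by exact_mod_cast hp.pos
  have hqpos : (0 : ℤ) < (q : ℤ) := by exact_mod_cast hq.pos
  have hRpos : (0 : ℤ) < (p : ℤ) ^ (2 * r) * (q : ℤ) ^ (2 * s) := by positivity
  have hNpos : (0 : ℤ) < (4 * a + 1) ^ 2 - 64 * c := by
    rcases lt_trichotomy ((4 * a + 1) ^ 2 - 64 * c) 0 with h' | h' | h'
    · exfalso; nlinarith
    · exfalso; rw [h', mul_zero] at h; exact absurd h.symm (ne_of_gt hRpos)
    · exact h'
  -- coprimality of c and N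
  have hcop2 : IsCoprime c ((4 * a + 1) ^ 2 - 64 * c) := by
    have h1 : IsCoprime c ((4 * a + 1) ^ 2) := hcop.symm.pow_right
    have h2 := h1.add_mul_left_right (-64)
    have h3 : (4 * a + 1) ^ 2 + c * (-64) = (4 * a + 1) ^ 2 - 64 * c := by ring
    rwa [h3] at h2
  -- N is a square
  have heqm : ((4 * a + 1) ^ 2 - 64 * c) * c = ((p : ℤ) ^ r * (q : ℤ) ^ s) ^ 2 := by
    rw [mul_comm, h]; ring
  obtain ⟨f, hf⟩ : ∃ f : ℤ, (4 * a + 1) ^ 2 - 64 * c = f ^ 2 := by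
    obtain ⟨f, hf | hf⟩ := Int.sq_of_isCoprime hcop2.symm heqm
    · exact ⟨f, hf⟩
    · exfalso; nlinarith [sq_nonneg f]
  obtain ⟨v, hv⟩ := hcsq
  have hv2 : c = v ^ 2 := by rw [hv]; ring
  -- move to natural numbers
  set B := (4 * a + 1).natAbs with hB
  set E := v.natAbs with hE
  set F := f.natAbs with hF
  have hcE : c = (E : ℤ) ^ 2 := by rw [hv2, hE, Int.natAbs_sq]
  have hNF : (4 * a + 1) ^ 2 - 64 * c = (F : ℤ) ^ 2 := by rw [hf, hF, Int.natAbs_sq]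
  have hbB : (4 * a + 1) ^ 2 = (B : ℤ) ^ 2 := by rw [hB, Int.natAbs_sq]
  have hBn : B ^ 2 = F ^ 2 + 64 * E ^ 2 := by
    have : (B : ℤ) ^ 2 = (F : ℤ) ^ 2 + 64 * (E : ℤ) ^ 2 := by
      rw [← hbB, ← hcE, ← hNF]; ring
    exact_mod_cast this
  have hEF : E * F = p ^ r * q ^ s := by
    have h1 : ((E * F : ℕ) : ℤ) ^ 2 = ((p ^ r * q ^ s : ℕ) : ℤ) ^ 2 := by
      push_cast
      have : ((E : ℤ) * F) ^ 2 = (E : ℤ) ^ 2 * (F : ℤ) ^ 2 := by ring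
      rw [this, ← hcE, ← hNF, mul_comm, heqm]
    have h2 : (E * F) ^ 2 = (p ^ r * q ^ s) ^ 2 := by exact_mod_cast h1
    exact Nat.pow_left_injective (by norm_num) h2
  have hcoEF : Nat.Coprime E F := by
    have h1 : Int.gcd c ((4 * a + 1) ^ 2 - 64 * c) = 1 :=
      Int.isCoprime_iff_gcd_eq_one.mp hcop2
    have h2 : Nat.gcd (E ^ 2) (F ^ 2) = 1 := by
      have hc' : c.natAbs = E ^ 2 := by rw [hcE]; simp [Int.natAbs_pow]
      have hN' : ((4 * a + 1) ^ 2 - 64 * c).natAbs = F ^ 2 := by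
        rw [hNF]; simp [Int.natAbs_pow]
      rwa [Int.gcd, hc', hN'] at h1
    have h3 : Nat.Coprime (E ^ 2) (F ^ 2) := h2
    have h4 := (Nat.coprime_pow_right_iff (by norm_num) (E ^ 2) F).mp h3
    exact (Nat.coprime_pow_left_iff (by norm_num) E F).mp h4
  have hcoBE : Nat.Coprime B E := by
    have h1 : Int.gcd (4 * a + 1) c = 1 := Int.isCoprime_iff_gcd_eq_one.mp hcop
    have h2 : Nat.Coprime B (E ^ 2) := by
      have hc' : c.natAbs = E ^ 2 := by rw [hcE]; simp [Int.natAbs_pow]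
      rwa [Int.gcd, hc'] at h1
    exact (Nat.coprime_pow_right_iff (by norm_num) B E).mp h2
  have hBodd : Odd B := by
    rw [hB, Int.natAbs_odd]
    exact ⟨2 * a, by ring⟩
  have hE1 : 1 ≤ E := by
    rcases Nat.eq_zero_or_pos E with h0 | h0
    · exfalso; rw [h0] at hcE; norm_num at hcE; omega
    · exact h0
  have hF1 : 1 ≤ F := by
    rcases Nat.eq_zero_or_pos F with h0 | h0
    · exfalso; rw [h0] at hNF; norm_num at hNF; omega
    · exact h0
  have hFodd : Odd F := by
    rcases Nat.even_or_odd F with hFe | hFo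
    · exfalso
      have h1 : Even (F ^ 2) := by rw [sq]; exact hFe.mul_left F
      have h2 : Even (B ^ 2) := by
        rw [hBn]; exact h1.add ⟨32 * E ^ 2, by ring⟩
      have h3 : Even B := by
        rcases Nat.even_or_odd B with hBe | hBo
        · exact hBe
        · exfalso; exact (Nat.not_odd_iff_even.mpr h2) (hBo.pow)
      exact (Nat.not_odd_iff_even.mpr h3) hBodd
    · exact hFo
  have hcoBF : Nat.Coprime B F := by
    by_contra hcon
    have hg1 : Nat.gcd B F ≠ 1 := hcon
    have hg0 : Nat.gcd B F ≠ 0 := by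
      intro h0
      have := Nat.eq_zero_of_gcd_eq_zero_left h0
      obtain ⟨w, hw⟩ := hBodd; omega
    set g := Nat.gcd B F with hgdef
    have hl := Nat.minFac_prime hg1
    have hlB : g.minFac ∣ B := dvd_trans (Nat.minFac_dvd g) (Nat.gcd_dvd_left B F)
    have hlF : g.minFac ∣ F := dvd_trans (Nat.minFac_dvd g) (Nat.gcd_dvd_right B F)
    have hl2 : g.minFac ≠ 2 := by
      intro h2
      have : (2 : ℕ) ∣ B := h2 ▸ hlB
      obtain ⟨w, hw⟩ := hBodd; omega
    have hldvd : g.minFac ∣ 64 * E ^ 2 := by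
      have h1 : g.minFac ∣ B ^ 2 := Dvd.dvd.pow hlB (by norm_num)
      have h2 : g.minFac ∣ F ^ 2 := Dvd.dvd.pow hlF (by norm_num)
      have h3 : B ^ 2 - F ^ 2 = 64 * E ^ 2 := by omega
      exact h3 ▸ Nat.dvd_sub h1 h2
    rcases (Nat.Prime.dvd_mul hl).mp hldvd with h64 | hE2
    · have h64' : (64 : ℕ) = 2 ^ 6 := by norm_num
      have := hl.dvd_of_dvd_pow (h64' ▸ h64)
      have := Nat.le_of_dvd (by norm_num) this
      have := hl.two_le
      omega
    · have hlE : g.minFac ∣ E := hl.dvd_of_dvd_pow hE2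
      have : g.minFac ∣ 1 := by
        have h1 : Nat.gcd B E = 1 := hcoBE
        exact h1 ▸ Nat.dvd_gcd hlB hlE
      have := Nat.le_of_dvd one_pos this
      have := hl.two_le
      omega
  have hBF : F < B := by
    by_contra hcon
    push_neg at hcon
    have h1 : B ^ 2 ≤ F ^ 2 := Nat.pow_le_pow_left hcon 2
    have h2 : 1 ≤ E ^ 2 := Nat.one_le_pow _ _ (by omega)
    omega
  obtain ⟨u, hu1, huB⟩ : ∃ u, 1 ≤ u ∧ B = F + 2 * u := by
    obtain ⟨k, hk⟩ := hBodd
    obtain ⟨l, hl⟩ := hFodd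
    exact ⟨k - l, by omega, by omega⟩
  have key : u * (u + F) = 16 * E ^ 2 := by
    have expand : (F + 2 * u) ^ 2 = F ^ 2 + 4 * (u * (u + F)) := by ring
    rw [huB, expand] at hBn
    have h4 : 4 * (u * (u + F)) = 4 * (16 * E ^ 2) := by omega
    omega
  have hcop_uF : Nat.Coprime u (u + F) := by
    have h1 : Nat.Coprime u F := by
      have hd : Nat.gcd u F ∣ B := by
        rw [huB]
        exact Nat.dvd_add (Nat.gcd_dvd_right u F)
          (Dvd.dvd.mul_left (Nat.gcd_dvd_left u F) 2)
      have h2 : Nat.gcd u F ∣ Nat.gcd B F := Nat.dvd_gcd hd (Nat.gcd_dvd_right u F)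
      have h3 : Nat.gcd B F = 1 := hcoBF
      rw [h3] at h2
      exact Nat.eq_one_of_dvd_one h2
    have h2 := (Nat.coprime_add_self_right (m := u) (n := F)).mpr h1
    rwa [Nat.add_comm] at h2
  -- case analysis on the shape of E and F
  rcases split_pow hp hq hpq r s E F hcoEF hEF with
    ⟨hE', hF'⟩ | ⟨hE', hF'⟩ | ⟨hE', hF'⟩ | ⟨hE', hF'⟩
  · -- E = 1, F = p^r * q^s = 15, so {p,q} = {3,5}
    left
    rw [hE'] at key
    norm_num at key
    have hF15 : 15 ≤ F := by
      have h1 : p ≤ p ^ r := Nat.le_self_pow (by omega) p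
      have h2 : q ≤ q ^ s := Nat.le_self_pow (by omega) q
      have h3 : p * q ≤ p ^ r * q ^ s := Nat.mul_le_mul h1 h2
      have h4 : 15 ≤ p * q := by
        rcases Nat.lt_or_ge p 5 with h5 | h5
        · have hpm : p % 2 = 1 := Nat.odd_iff.mp hpodd
          have hqm : q % 2 = 1 := Nat.odd_iff.mp hqodd
          have hp3' : p = 3 := by omega
          have hq5 : 5 ≤ q := by omega
          rw [hp3']; omega
        · have := Nat.mul_le_mul h5 hq3; omega
      omega
    have hu' : u = 1 := by
      by_contra h'
      have h2 : 2 ≤ u := by omega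
      have h3 : 2 * (2 + F) ≤ u * (u + F) := Nat.mul_le_mul h2 (by omega)
      omega
    have hF'' : F = 15 := by rw [hu'] at key; omega
    have h15 : p ^ r * q ^ s = 15 := by rw [← hF']; exact hF''
    have hpd : p ∣ 15 := by
      refine dvd_trans (dvd_pow_self p (n := r) (by omega)) ⟨q ^ s, h15.symm⟩
    have hqd : q ∣ 15 := by
      refine dvd_trans (dvd_pow_self q (n := s) (by omega)) ⟨p ^ r, by rw [← h15]; ring⟩
    have hp35 : p = 3 ∨ p = 5 := by
      have h' : p ∣ 3 * 5 := by norm_num; exact hpd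
      rcases (Nat.Prime.dvd_mul hp).mp h' with h3' | h5'
      · left; exact (Nat.prime_dvd_prime_iff_eq hp (by norm_num)).mp h3'
      · right; exact (Nat.prime_dvd_prime_iff_eq hp (by norm_num)).mp h5'
    have hq35 : q = 3 ∨ q = 5 := by
      have h' : q ∣ 3 * 5 := by norm_num; exact hqd
      rcases (Nat.Prime.dvd_mul hq).mp h' with h3' | h5'
      · left; exact (Nat.prime_dvd_prime_iff_eq hq (by norm_num)).mp h3'
      · right; exact (Nat.prime_dvd_prime_iff_eq hq (by norm_num)).mp h5'
    rcases hp35 with hp' | hp' <;> rcases hq35 with hq' | hq'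
    · exact absurd (hp'.trans hq'.symm) hpq
    · rw [hp', hq']
    · rw [hp', hq']; exact Set.pair_comm 5 3
    · exact absurd (hp'.trans hq'.symm) hpq
  · -- E = p^r, F = q^s
    rw [hE'] at key
    rw [hF'] at key hcop_uF
    have key' : u * (u + q ^ s) = 16 * p ^ (2 * r) := by
      rw [key, two_mul, pow_add]; ring
    rcases case_pow hp hq hpodd hqodd hr hs hu1 hcop_uF key' with ⟨hp', hq'⟩ | ⟨hp', hq'⟩
    · left; rw [hp', hq']; exact Set.pair_comm 5 3
    · right; rw [hp', hq']
  · -- E = q^s, F = p^r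
    rw [hE'] at key
    rw [hF'] at key hcop_uF
    have key' : u * (u + p ^ r) = 16 * q ^ (2 * s) := by
      rw [key, two_mul, pow_add]; ring
    rcases case_pow hq hp hqodd hpodd hs hr hu1 hcop_uF key' with ⟨hq', hp'⟩ | ⟨hq', hp'⟩
    · left; rw [hp', hq']
    · right; rw [hp', hq']; exact Set.pair_comm 7 3
  · -- F = 1 : impossible
    exfalso
    rw [hF'] at hBn
    norm_num at hBn
    have h8 : 8 * E < B := by
      by_contra hcon
      push_neg at hcon
      have h1 : B ^ 2 ≤ (8 * E) ^ 2 := Nat.pow_le_pow_left hcon 2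
      have h2 : (8 * E) ^ 2 = 64 * E ^ 2 := by ring
      omega
    have h9 : 8 * E + 1 ≤ B := h8
    have h10 : (8 * E + 1) ^ 2 ≤ B ^ 2 := Nat.pow_le_pow_left h9 2
    have h11 : (8 * E + 1) ^ 2 = 64 * E ^ 2 + 16 * E + 1 := by ring
    omega
end
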